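/- arXiv:1503.06308 — 4 statements merged into one kernel-verified Lean document; each statement's English description precedes it below -/
import Mathlib

section
/- Let 𝓛 be an n×n Lefkovitch matrix with first row f_1,...,f_n, subdiagonal entries b_1,...,b_{n-1} > 0, and diagonal entries 0, c_1, ..., c_{n-1} (in rows 2 through n), and zeros elsewhere. Define S to be the upper unitriangular matrix with entries s_{i,j} = Γ_i^{j-i} / Λ_i^{j-1} for j ≥ i, and define L to be the pseudo-Leslie matrix with first row φ_j = -Γ_1^j / Λ_1^{j-1} + Σ_{k=1}^{j} (Γ_k^{j-k} / Λ_k^{j-1}) f_k, subdiagonal entries b_1,...,b_{n-1}, and zeros elsewhere. Then S is invertible and S⁻¹ 𝓛 S = L. -/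
open Finset Matrix

/-- `Γ_i^p`: signed sums of products of the retention coefficients. -/
def Gam (n : ℕ) (c : ℕ → ℝ) (i p : ℕ) : ℝ :=
  (-1 : ℝ) ^ p * ∑ s ∈ Finset.powersetCard p (Finset.Icc i (n - 1)), ∏ k ∈ s, c k

/-- `Λ_i^j = b_i ⋯ b_j` (equal to `1` when `j = i - 1`, the empty product). -/
def Lam (b : ℕ → ℝ) (i j : ℕ) : ℝ := ∏ k ∈ Finset.Icc i j, b k

/-- The Lefkovitch (Usher) matrix with fertilities `f`, transition rates `b` and
retention rates `c` (all in 1-based indexing). -/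
def Lef (n : ℕ) (f c b : ℕ → ℝ) : Matrix (Fin n) (Fin n) ℝ := fun i j =>
  if i.val = 0 then f (j.val + 1)
  else if i.val = j.val + 1 then b i.val
  else if i = j then c i.val
  else 0

/-- The upper unitriangular similarity matrix `S`, with
`s_{i,j} = Γ_i^{j-i} / Λ_i^{j-1}` for `j ≥ i` (1-based). -/
noncomputable def Smat (n : ℕ) (c b : ℕ → ℝ) : Matrix (Fin n) (Fin n) ℝ := fun i j =>
  if i ≤ j then Gam n c (i.val + 1) (j.val - i.val) / Lam b (i.val + 1) j.val else 0

/-- The first-row coefficients of the pseudo-Leslie matrix: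
`φ_j = -Γ_1^j/Λ_1^{j-1} + ∑_{k=1}^{j} (Γ_k^{j-k}/Λ_k^{j-1}) f_k`. -/
noncomputable def phi (n : ℕ) (f c b : ℕ → ℝ) (j : ℕ) : ℝ :=
  -(Gam n c 1 j / Lam b 1 (j - 1)) +
    ∑ k ∈ Finset.Icc 1 j, Gam n c k (j - k) / Lam b k (j - 1) * f k

/-- A pseudo-Leslie matrix: first row `φ`, subdiagonal `b`, zeros elsewhere. -/
def PLes (n : ℕ) (φ b : ℕ → ℝ) : Matrix (Fin n) (Fin n) ℝ := fun i j =>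
  if i.val = 0 then φ (j.val + 1)
  else if i.val = j.val + 1 then b i.val
  else 0

/-!
Write `S` for `Smat`. Since `S` is unitriangular, `det S = 1`, so it suffices to check
`𝓛 S = S L` column by column. In a row `a ≥ 1` this reads
`b_a s_{a-1,d} + c_a s_{a,d} = s_{a,d+1} b_{d+1}`, which after clearing the `Λ`'s is the
recurrence `Γ_a^{p+1} = Γ_{a+1}^{p+1} - c_a Γ_{a+1}^p` of signed elementary symmetric sums.
In the first row, `φ` is defined precisely so that the identity holds. At the last column
`d = n - 1` the right-hand side vanishes because `Γ_{a+1}^{n-a} = 0`.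
-/

theorem sum_powersetCard_succ_insert_prod {ι R : Type*} [DecidableEq ι] [CommSemiring R]
    {a : ι} {s : Finset ι} (ha : a ∉ s) (g : ι → R) (p : ℕ) :
    ∑ t ∈ (insert a s).powersetCard (p + 1), ∏ k ∈ t, g k =
      ∑ t ∈ s.powersetCard (p + 1), ∏ k ∈ t, g k +
        g a * ∑ t ∈ s.powersetCard p, ∏ k ∈ t, g k := by
  simp only [← Finset.esymm_map_val, Finset.insert_val_of_notMem ha, Multiset.map_cons,
    Multiset.esymm, Multiset.powersetCard_cons, Multiset.map_add, Multiset.sum_add,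
    Multiset.map_map, Function.comp_def, Multiset.prod_cons, Multiset.sum_map_mul_left]

section Gam

variable {n : ℕ} {c : ℕ → ℝ}

theorem Gam_zero (i : ℕ) : Gam n c i 0 = 1 := by
  simp [Gam]

theorem Gam_eq_zero_of_lt {i p : ℕ} (hi : 1 ≤ i) (h : n - i < p) : Gam n c i p = 0 := by
  rw [Gam, powersetCard_eq_empty.2 (by rw [Nat.card_Icc]; omega), sum_empty, mul_zero]

theorem Gam_succ {i : ℕ} (hi : i < n) (p : ℕ) :
    Gam n c i (p + 1) = Gam n c (i + 1) (p + 1) - c i * Gam n c (i + 1) p := by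
  rw [Gam, ← insert_Icc_add_one_left_eq_Icc (by omega : i ≤ n - 1),
    sum_powersetCard_succ_insert_prod (by simp), Gam, Gam]
  ring

end Gam

section Lam

variable {b : ℕ → ℝ}

theorem Lam_succ_self (i : ℕ) : Lam b (i + 1) i = 1 := by
  rw [Lam, Icc_eq_empty (by omega), prod_empty]

theorem Lam_eq_mul_Lam_succ {i j : ℕ} (h : i ≤ j) : Lam b i j = b i * Lam b (i + 1) j := by
  rw [Lam, Lam, ← insert_Icc_add_one_left_eq_Icc h, prod_insert (by simp)]

theorem Lam_succ_right {i j : ℕ} (h : i ≤ j + 1) : Lam b i (j + 1) = Lam b i j * b (j + 1) :=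
  prod_Icc_succ_top h b

theorem Lam_ne_zero {i j : ℕ} (hb : ∀ k ∈ Icc i j, b k ≠ 0) : Lam b i j ≠ 0 :=
  prod_ne_zero_iff.2 hb

end Lam

/-- `Smat n c b` extended to indices in `ℕ`; its column `n` vanishes, which absorbs the
missing subdiagonal entry in the last column of `S L`. -/
noncomputable def sEntry (n : ℕ) (c b : ℕ → ℝ) (a d : ℕ) : ℝ :=
  if a ≤ d then Gam n c (a + 1) (d - a) / Lam b (a + 1) d else 0

section sEntry

variable {n : ℕ} {f c b : ℕ → ℝ}

theorem Smat_eq_of : Smat n c b = of fun (i j : Fin n) => sEntry n c b i j := by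
  ext i j
  simp only [Smat, sEntry, of_apply, Fin.le_iff_val_le_val]

theorem sEntry_self (a : ℕ) : sEntry n c b a a = 1 := by
  simp [sEntry, Gam_zero, Lam_succ_self]

theorem sEntry_of_lt {a d : ℕ} (h : d < a) : sEntry n c b a d = 0 :=
  if_neg (Nat.not_le.2 h)

theorem sEntry_of_le {a d : ℕ} (h : a ≤ d) :
    sEntry n c b a d = Gam n c (a + 1) (d - a) / Lam b (a + 1) d :=
  if_pos h

theorem sEntry_eq_zero_of_right {a : ℕ} (ha : a < n) : sEntry n c b a n = 0 := by
  rw [sEntry_of_le ha.le, Gam_eq_zero_of_lt (by omega) (by omega), zero_div]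

variable (hb : ∀ k, 1 ≤ k → k ≤ n - 1 → 0 < b k)
include hb

theorem sEntry_succ_mul {a d : ℕ} (had : a ≤ d) (hd : d < n) :
    sEntry n c b a (d + 1) * b (d + 1) = Gam n c (a + 1) (d + 1 - a) / Lam b (a + 1) d := by
  rcases (show d + 1 ≤ n from hd).lt_or_eq with hd1 | hd1
  · rw [sEntry_of_le (by omega), Lam_succ_right (by omega),
      div_mul_eq_mul_div, mul_div_mul_right _ _ (hb (d + 1) (by omega) (by omega)).ne']
  · rw [hd1, sEntry_eq_zero_of_right (by omega), zero_mul, ← hd1,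
      Gam_eq_zero_of_lt (by omega) (by omega), zero_div]

theorem sEntry_recurrence {a d : ℕ} (ha : 1 ≤ a) (han : a < n) (hd : d < n) :
    b a * sEntry n c b (a - 1) d + c a * sEntry n c b a d = sEntry n c b a (d + 1) * b (d + 1) := by
  rcases lt_trichotomy d (a - 1) with hlt | rfl | hgt
  · rw [sEntry_of_lt hlt, sEntry_of_lt (by omega), sEntry_of_lt (by omega)]
    ring
  · rw [sEntry_self, sEntry_of_lt (by omega), Nat.sub_add_cancel ha, sEntry_self]
    ring
  · have hΛ : Lam b (a + 1) d ≠ 0 :=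
      Lam_ne_zero fun k hk => (hb k (by simp at hk; omega) (by simp at hk; omega)).ne'
    have hba : b a ≠ 0 := (hb a ha (by omega)).ne'
    rw [sEntry_succ_mul hb (by omega) hd, sEntry_of_le (by omega), sEntry_of_le (by omega),
      Nat.sub_add_cancel ha, Lam_eq_mul_Lam_succ (by omega), show d - (a - 1) = d - a + 1 by omega,
      show d + 1 - a = d - a + 1 by omega, Gam_succ han]
    field_simp
    ring

theorem sum_mul_sEntry {d : ℕ} (hd : d < n) :
    ∑ m ∈ range n, f (m + 1) * sEntry n c b m d =
      phi n f c b (d + 1) + sEntry n c b 0 (d + 1) * b (d + 1) := by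
  have htrunc : ∑ m ∈ range n, f (m + 1) * sEntry n c b m d =
      ∑ m ∈ range (d + 1), f (m + 1) * sEntry n c b m d :=
    (sum_subset (range_subset_range.2 hd) fun m _ hm => by
      rw [sEntry_of_lt (by simpa using hm), mul_zero]).symm
  have hshift : ∑ k ∈ Icc 1 (d + 1), Gam n c k (d + 1 - k) / Lam b k (d + 1 - 1) * f k =
      ∑ m ∈ range (d + 1), f (m + 1) * sEntry n c b m d := by
    rw [← Ico_add_one_right_eq_Icc, range_eq_Ico, ← sum_Ico_add' _ 0 (d + 1) 1]
    refine sum_congr rfl fun m hm => ?_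
    rw [sEntry_of_le (by simp at hm; omega), Nat.add_sub_cancel, Nat.add_sub_add_right, mul_comm]
  rw [htrunc, phi, hshift, sEntry_succ_mul hb (Nat.zero_le d) hd, Nat.add_sub_cancel, Nat.sub_zero]
  ring

end sEntry

theorem Lef_mul_of_apply {n : ℕ} (f c b : ℕ → ℝ) (g : ℕ → ℕ → ℝ) (i j : Fin n) :
    (Lef n f c b * of fun (i j : Fin n) => g i j) i j =
      if (i : ℕ) = 0 then ∑ m ∈ range n, f (m + 1) * g m j
      else b i * g (i - 1) j + c i * g i j := by
  simp only [mul_apply, of_apply, Lef, Fin.ext_iff]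
  rw [Fin.sum_univ_eq_sum_range (fun m => (if (i : ℕ) = 0 then f (m + 1)
    else if (i : ℕ) = m + 1 then b i else if (i : ℕ) = m then c i else 0) * g m j)]
  split_ifs with hi
  · rfl
  · rw [sum_eq_add ((i : ℕ) - 1) (i : ℕ) (by omega) (fun m _ _ => by grind) (fun _ => by grind)
      (fun _ => by grind)]
    grind

theorem of_mul_PLes_apply {n : ℕ} (φ b : ℕ → ℝ) (g : ℕ → ℕ → ℝ) (hg : ∀ a < n, g a n = 0)
    (i j : Fin n) :
    ((of fun (i j : Fin n) => g i j) * PLes n φ b) i j =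
      g i 0 * φ (j + 1) + g i (j + 1) * b (j + 1) := by
  simp only [mul_apply, of_apply, PLes]
  rw [Fin.sum_univ_eq_sum_range
      (fun m => g i m * (if m = 0 then φ (j + 1) else if m = j + 1 then b m else 0)),
    sum_eq_add 0 ((j : ℕ) + 1) (by omega) (fun m _ _ => by grind) (fun _ => by grind)
      (fun _ => by grind)]
  grind

section Smat

variable {n : ℕ} {c b : ℕ → ℝ}

theorem det_Smat : (Smat n c b).det = 1 := by
  rw [det_of_isUpperTriangular fun i j hij => by
    rw [Smat_eq_of, of_apply]; exact sEntry_of_lt hij]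
  exact prod_eq_one fun i _ => by rw [Smat_eq_of, of_apply, sEntry_self]

theorem Lef_mul_Smat (f : ℕ → ℝ) (hb : ∀ k, 1 ≤ k → k ≤ n - 1 → 0 < b k) :
    Lef n f c b * Smat n c b = Smat n c b * PLes n (phi n f c b) b := by
  ext i j
  rw [Smat_eq_of, Lef_mul_of_apply, of_mul_PLes_apply _ _ _ fun a ha => sEntry_eq_zero_of_right ha]
  split_ifs with hi
  · rw [hi, sEntry_self, one_mul]
    exact sum_mul_sEntry hb j.2
  · rw [sEntry_of_lt (a := i) (d := 0) (by omega), zero_mul, zero_add]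
    exact sEntry_recurrence hb (by omega) i.2 j.2

end Smat

theorem similarity_lefkovitch_pseudoLeslie_general (n : ℕ)
    (f c b : ℕ → ℝ) (hb : ∀ k, 1 ≤ k → k ≤ n - 1 → 0 < b k) :
    IsUnit (Smat n c b) ∧
      (Smat n c b)⁻¹ * Lef n f c b * Smat n c b = PLes n (phi n f c b) b := by
  have hdet : IsUnit (Smat n c b).det := by rw [det_Smat]; exact isUnit_one
  refine ⟨(isUnit_iff_isUnit_det _).2 hdet, ?_⟩
  rw [Matrix.mul_assoc, Lef_mul_Smat f hb, nonsing_inv_mul_cancel_left _ _ hdet]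

theorem similarity_lefkovitch_pseudoLeslie (n : ℕ) (hn : 1 ≤ n)
    (f c b : ℕ → ℝ) (hb : ∀ k, 1 ≤ k → k ≤ n - 1 → 0 < b k) :
    IsUnit (Smat n c b) ∧
      (Smat n c b)⁻¹ * Lef n f c b * Smat n c b = PLes n (phi n f c b) b :=
  similarity_lefkovitch_pseudoLeslie_general n f c b hb
end

section
/- Under the hypotheses that 𝓛S = SL with S invertible, λ ≠ 0 a common eigenvalue, u a right eigenvector of L with nonzero entries, w = Su a right eigenvector of 𝓛 with nonzero entries, U = diag(u), W = diag(w), and P^L = (1/λ)U⁻¹LU, P^𝓛 = (1/λ)W⁻¹𝓛W: if π^𝓛 is a row vector with π^𝓛 P^𝓛 = π^𝓛, then π^L := π^𝓛 W⁻¹SU satisfies π^L P^L = π^L. -/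
/-!
The matrix `A = W⁻¹ S U` intertwines the two Markov matrices, `A P^L = P^𝓛 A`, because
`U U⁻¹ = 1`, `𝓛 S = S L` and `W W⁻¹ = 1`. Any intertwiner carries fixed row vectors of
`P^𝓛` to fixed row vectors of `P^L`.
-/

open Matrix

namespace Matrix

variable {ι R : Type*} [Fintype ι]

theorem vecMul_fixed_of_mul_eq_mul [CommSemiring R] {A P Q : Matrix ι ι R} {π : ι → R}
    (hAPQ : A * P = Q * A) (hπ : π ᵥ* Q = π) : π ᵥ* A ᵥ* P = π ᵥ* A := by
  rw [vecMul_vecMul, hAPQ, ← vecMul_vecMul, hπ]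

variable [DecidableEq ι]

theorem isUnit_diagonal_of_ne_zero {K : Type*} [Field K] {v : ι → K} (hv : ∀ i, v i ≠ 0) :
    IsUnit (diagonal v) :=
  isUnit_diagonal.2 <| Pi.isUnit_iff.2 fun i => (hv i).isUnit

theorem conj_mul_conj_eq_conj_mul_conj [CommRing R] {𝓛 L S U W : Matrix ι ι R}
    (hsim : 𝓛 * S = S * L) (hU : IsUnit U) (hW : IsUnit W) :
    W⁻¹ * S * U * (U⁻¹ * L * U) = W⁻¹ * 𝓛 * W * (W⁻¹ * S * U) := by
  have hUU : U * U⁻¹ = 1 := mul_nonsing_inv U ((isUnit_iff_isUnit_det U).1 hU)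
  have hWW : W * W⁻¹ = 1 := mul_nonsing_inv W ((isUnit_iff_isUnit_det W).1 hW)
  calc W⁻¹ * S * U * (U⁻¹ * L * U)
      = W⁻¹ * (S * (U * U⁻¹) * L) * U := by noncomm_ring
    _ = W⁻¹ * (𝓛 * S) * U := by rw [hUU, mul_one, hsim]
    _ = W⁻¹ * 𝓛 * (W * W⁻¹) * (S * U) := by rw [hWW]; noncomm_ring
    _ = W⁻¹ * 𝓛 * W * (W⁻¹ * S * U) := by noncomm_ring

end Matrix

theorem stationary_distribution_transform_general (n : ℕ)
    (𝓛 L S : Matrix (Fin n) (Fin n) ℝ) (hsim : 𝓛 * S = S * L)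
    (lam : ℝ)
    (u : Fin n → ℝ) (hu : ∀ i, u i ≠ 0)
    (w : Fin n → ℝ) (hw0 : ∀ i, w i ≠ 0)
    (U W PL P𝓛 : Matrix (Fin n) (Fin n) ℝ)
    (hU : U = Matrix.diagonal u) (hW : W = Matrix.diagonal w)
    (hPL : PL = (1 / lam) • (U⁻¹ * L * U))
    (hP𝓛 : P𝓛 = (1 / lam) • (W⁻¹ * 𝓛 * W))
    (π𝓛 : Fin n → ℝ) (hπ𝓛 : Matrix.vecMul π𝓛 P𝓛 = π𝓛) :
    Matrix.vecMul (Matrix.vecMul π𝓛 (W⁻¹ * S * U)) PL =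
      Matrix.vecMul π𝓛 (W⁻¹ * S * U) := by
  have hUunit : IsUnit U := hU ▸ isUnit_diagonal_of_ne_zero hu
  have hWunit : IsUnit W := hW ▸ isUnit_diagonal_of_ne_zero hw0
  refine vecMul_fixed_of_mul_eq_mul ?_ hπ𝓛
  rw [hPL, hP𝓛, Matrix.mul_smul, Matrix.smul_mul, conj_mul_conj_eq_conj_mul_conj hsim hUunit hWunit]

/-- Transformation rule for stationary distributions: if `π^𝓛 P^𝓛 = π^𝓛`, then
`π^L = π^𝓛 W⁻¹ S U` satisfies `π^L P^L = π^L`. -/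
theorem stationary_distribution_transform (n : ℕ) (hn : 1 ≤ n)
    (𝓛 L S : Matrix (Fin n) (Fin n) ℝ) (hS : IsUnit S) (hsim : 𝓛 * S = S * L)
    (lam : ℝ) (hlam : lam ≠ 0)
    (u : Fin n → ℝ) (hu : ∀ i, u i ≠ 0) (hLu : L.mulVec u = lam • u)
    (w : Fin n → ℝ) (hw : w = S.mulVec u) (hw0 : ∀ i, w i ≠ 0)
    (h𝓛w : 𝓛.mulVec w = lam • w)
    (U W PL P𝓛 : Matrix (Fin n) (Fin n) ℝ)
    (hU : U = Matrix.diagonal u) (hW : W = Matrix.diagonal w)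
    (hPL : PL = (1 / lam) • (U⁻¹ * L * U))
    (hP𝓛 : P𝓛 = (1 / lam) • (W⁻¹ * 𝓛 * W))
    (π𝓛 : Fin n → ℝ) (hπ𝓛 : Matrix.vecMul π𝓛 P𝓛 = π𝓛) :
    Matrix.vecMul (Matrix.vecMul π𝓛 (W⁻¹ * S * U)) PL =
      Matrix.vecMul π𝓛 (W⁻¹ * S * U) :=
  stationary_distribution_transform_general n 𝓛 L S hsim lam u hu w hw0 U W PL P𝓛 hU hW hPL hP𝓛 π𝓛
    hπ𝓛
end

section
/- The Kolmogorov–Sinai entropy of the associated Markov chains is not a similarity invariant: for the similar 2×2 matrices 𝓛 = [[1, 3], [2/5, 11/20]] and L = [[31/20, 13/8], [2/5, 0]], the entropies H_𝓛 = −Σ_{i,j} π_i^𝓛 p_{ij}^𝓛 log p_{ij}^𝓛 and H_L = −Σ_{i,j} π_i^L p_{ij}^L log p_{ij}^L of their associated Markov matrices are different (H_𝓛 ≈ 0.656 ≠ H_L ≈ 0.401). -/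
/-!
For `A u = λ u` the Markov matrix `p_ij = A_ij u_j / (λ u_i)` is stochastic with diagonal
`A_ii / λ`, so for a `2 × 2` matrix its rows are `(A_ii / λ, 1 - A_ii / λ)` up to order, and the
entropy is the convex combination `Σ_i π_i h(A_ii / λ)` of binary entropies. As
`31/20 ≤ λ ≤ 77/40`, the rows of `L` have entropies `h(0) = 0` and `h(31/(20λ)) ≤ h(4/5)`, while
those of `𝓛` have entropies `h(1/λ), h(11/(20λ)) ≥ h(5/7)`; since `h` is strictly decreasing on
`[1/2, 1]`, `H_L ≤ h(4/5) < h(5/7) ≤ H_𝓛`.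
-/

open Matrix Real

section Markov

variable {n : Type*}

noncomputable def markovMatrix (A : Matrix n n ℝ) (lam : ℝ) (u : n → ℝ) : Matrix n n ℝ :=
  of fun i j => A i j * u j / (lam * u i)

theorem markovMatrix_apply_self (A : Matrix n n ℝ) (lam : ℝ) {u : n → ℝ} {i : n}
    (hu : u i ≠ 0) : markovMatrix A lam u i i = A i i / lam := by
  simp only [markovMatrix, of_apply]
  field_simp

theorem sum_markovMatrix_apply [Fintype n] {A : Matrix n n ℝ} {lam : ℝ} {u : n → ℝ}
    (hAu : A *ᵥ u = lam • u) (hlam : lam ≠ 0) {i : n} (hu : u i ≠ 0) :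
    ∑ j, markovMatrix A lam u i j = 1 := by
  have hrow : ∑ j, A i j * u j = lam * u i := by
    simpa [mulVec, dotProduct] using congrFun hAu i
  simp only [markovMatrix, of_apply, ← Finset.sum_div, hrow]
  exact div_self (mul_ne_zero hlam hu)

end Markov

theorem neg_sum_mul_log_eq_binEntropy {P : Matrix (Fin 2) (Fin 2) ℝ} {i : Fin 2}
    (hP : ∑ j, P i j = 1) : -∑ j, P i j * log (P i j) = binEntropy (P i i) := by
  rw [binEntropy_eq_negMulLog_add_negMulLog_one_sub, negMulLog, negMulLog]
  fin_cases i <;> simp only [Fin.zero_eta, Fin.mk_one, Fin.isValue, Fin.sum_univ_two] at hP ⊢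
  · rw [show 1 - P 0 0 = P 0 1 by linarith]
    ring
  · rw [show 1 - P 1 1 = P 1 0 by linarith]
    ring

theorem markov_entropy_eq_sum_mul_binEntropy {A : Matrix (Fin 2) (Fin 2) ℝ} {lam : ℝ}
    {u : Fin 2 → ℝ} (hAu : A *ᵥ u = lam • u) (hlam : lam ≠ 0) (hu : ∀ i, u i ≠ 0)
    (μ : Fin 2 → ℝ) :
    -(∑ i, ∑ j, μ i * markovMatrix A lam u i j * log (markovMatrix A lam u i j)) =
      ∑ i, μ i * binEntropy (A i i / lam) := by
  rw [← Finset.sum_neg_distrib]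
  refine Finset.sum_congr rfl fun i _ => ?_
  simp only [mul_assoc, ← Finset.mul_sum, ← mul_neg]
  rw [neg_sum_mul_log_eq_binEntropy (sum_markovMatrix_apply hAu hlam (hu i)),
    markovMatrix_apply_self A lam (hu i)]

section ConvexCombination

variable {ι : Type*} [Fintype ι] {μ x : ι → ℝ} {c : ℝ}

theorem sum_mul_le_of_forall_le (hμ : ∀ i, 0 ≤ μ i) (hμ1 : ∑ i, μ i = 1)
    (hx : ∀ i, x i ≤ c) : ∑ i, μ i * x i ≤ c :=
  calc ∑ i, μ i * x i ≤ ∑ i, μ i * c :=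
        Finset.sum_le_sum fun i _ => mul_le_mul_of_nonneg_left (hx i) (hμ i)
    _ = c := by rw [← Finset.sum_mul, hμ1, one_mul]

theorem le_sum_mul_of_forall_le (hμ : ∀ i, 0 ≤ μ i) (hμ1 : ∑ i, μ i = 1)
    (hx : ∀ i, c ≤ x i) : c ≤ ∑ i, μ i * x i :=
  calc c = ∑ i, μ i * c := by rw [← Finset.sum_mul, hμ1, one_mul]
    _ ≤ ∑ i, μ i * x i :=
        Finset.sum_le_sum fun i _ => mul_le_mul_of_nonneg_left (hx i) (hμ i)

end ConvexCombination

theorem binEntropy_le_binEntropy_of_le {p q : ℝ} (hq : 2⁻¹ ≤ q) (hqp : q ≤ p) (hp : p ≤ 1) :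
    binEntropy p ≤ binEntropy q :=
  binEntropy_strictAntiOn.antitoneOn ⟨hq, hqp.trans hp⟩ ⟨hq.trans hqp, hp⟩ hqp

theorem mem_Icc_of_eq_sqrt_2001 {lam : ℝ} (hlam : lam = (31 + √2001) / 40) :
    lam ∈ Set.Icc (31 / 20) (77 / 40) := by
  have hlo : 31 ≤ √2001 := Real.le_sqrt_of_sq_le (by norm_num)
  have hhi : √2001 ≤ 46 := Real.sqrt_le_iff.mpr ⟨by norm_num, by norm_num⟩
  constructor <;> rw [hlam] <;> linarith

theorem entropy_not_similarity_invariant_general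
    (lam : ℝ) (hlam : lam = (31 + Real.sqrt 2001) / 40)
    (𝓛 L : Matrix (Fin 2) (Fin 2) ℝ)
    (h𝓛 : 𝓛 = !![1, 3; 2/5, 11/20]) (hL : L = !![31/20, 13/8; 2/5, 0])
    -- positive right eigenvectors for the common dominant eigenvalue
    (u w : Fin 2 → ℝ) (hu : ∀ i, 0 < u i) (hw : ∀ i, 0 < w i)
    (hLu : L.mulVec u = lam • u) (h𝓛w : 𝓛.mulVec w = lam • w)
    -- the associated Markov matrices
    (PL P𝓛 : Matrix (Fin 2) (Fin 2) ℝ)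
    (hPL : ∀ i j, PL i j = L i j * u j / (lam * u i))
    (hP𝓛 : ∀ i j, P𝓛 i j = 𝓛 i j * w j / (lam * w i))
    -- their stationary distributions
    (πL π𝓛 : Fin 2 → ℝ)
    (hπLpos : ∀ i, 0 ≤ πL i) (hπLsum : ∑ i, πL i = 1)
    (hπ𝓛pos : ∀ i, 0 ≤ π𝓛 i) (hπ𝓛sum : ∑ i, π𝓛 i = 1) :
    -(∑ i, ∑ j, π𝓛 i * P𝓛 i j * Real.log (P𝓛 i j)) ≠
      -(∑ i, ∑ j, πL i * PL i j * Real.log (PL i j)) := by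
  obtain ⟨hlo, hhi⟩ := mem_Icc_of_eq_sqrt_2001 hlam
  have hlam0 : lam ≠ 0 := by positivity
  obtain rfl : PL = markovMatrix L lam u := Matrix.ext hPL
  obtain rfl : P𝓛 = markovMatrix 𝓛 lam w := Matrix.ext hP𝓛
  rw [markov_entropy_eq_sum_mul_binEntropy hLu hlam0 fun i => (hu i).ne',
    markov_entropy_eq_sum_mul_binEntropy h𝓛w hlam0 fun i => (hw i).ne']
  subst h𝓛 hL
  have hL_rows : ∀ i, binEntropy (!![31/20, 13/8; 2/5, 0] i i / lam) ≤ binEntropy (4/5) := by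
    refine Fin.forall_fin_two.mpr ⟨?_, ?_⟩ <;> simp only [of_apply, cons_val', cons_val_zero,
      cons_val_one, empty_val', cons_val_fin_one, zero_div, binEntropy_zero]
    · have h_lo : 4 / 5 ≤ 31 / 20 / lam := (le_div_iff₀ (by positivity)).mpr (by linarith)
      have h_hi : 31 / 20 / lam ≤ 1 := (div_le_one (by positivity)).mpr (by linarith)
      exact binEntropy_le_binEntropy_of_le (by norm_num) h_lo h_hi
    · exact binEntropy_nonneg (by norm_num) (by norm_num)
  have h𝓛_rows : ∀ i, binEntropy (5/7) ≤ binEntropy (!![1, 3; 2/5, 11/20] i i / lam) := by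
    refine Fin.forall_fin_two.mpr ⟨?_, ?_⟩ <;> simp only [of_apply, cons_val', cons_val_zero,
      cons_val_one, empty_val', cons_val_fin_one]
    · have h_lo : 2⁻¹ ≤ 1 / lam := (le_div_iff₀ (by positivity)).mpr (by linarith)
      have h_hi : 1 / lam ≤ 5 / 7 := (div_le_iff₀ (by positivity)).mpr (by linarith)
      exact binEntropy_le_binEntropy_of_le h_lo h_hi (by norm_num)
    · rw [← binEntropy_one_sub (11 / 20 / lam)]
      have h_lo : 2 / 7 ≤ 11 / 20 / lam := (le_div_iff₀ (by positivity)).mpr (by linarith)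
      have h_hi : 11 / 20 / lam ≤ 1 / 2 := (div_le_iff₀ (by positivity)).mpr (by linarith)
      exact binEntropy_le_binEntropy_of_le (by linarith) (by linarith) (by norm_num)
  have h_gap : binEntropy (4/5) < binEntropy (5/7) :=
    binEntropy_strictAntiOn ⟨by norm_num, by norm_num⟩ ⟨by norm_num, by norm_num⟩ (by norm_num)
  exact (((sum_mul_le_of_forall_le hπLpos hπLsum hL_rows).trans_lt h_gap).trans_le
    (le_sum_mul_of_forall_le hπ𝓛pos hπ𝓛sum h𝓛_rows)).ne'

/-- The Kolmogorov–Sinai entropy of the associated Markov chains is not a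
similarity invariant: the similar matrices `𝓛 = [[1, 3], [2/5, 11/20]]` and
`L = [[31/20, 13/8], [2/5, 0]]`, with common dominant eigenvalue
`λ = (31 + √2001)/40`, have associated Markov chains with different entropies. -/
theorem entropy_not_similarity_invariant
    (lam : ℝ) (hlam : lam = (31 + Real.sqrt 2001) / 40)
    (𝓛 L : Matrix (Fin 2) (Fin 2) ℝ)
    (h𝓛 : 𝓛 = !![1, 3; 2/5, 11/20]) (hL : L = !![31/20, 13/8; 2/5, 0])
    -- positive right eigenvectors for the common dominant eigenvalue
    (u w : Fin 2 → ℝ) (hu : ∀ i, 0 < u i) (hw : ∀ i, 0 < w i)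
    (hLu : L.mulVec u = lam • u) (h𝓛w : 𝓛.mulVec w = lam • w)
    -- the associated Markov matrices
    (PL P𝓛 : Matrix (Fin 2) (Fin 2) ℝ)
    (hPL : ∀ i j, PL i j = L i j * u j / (lam * u i))
    (hP𝓛 : ∀ i j, P𝓛 i j = 𝓛 i j * w j / (lam * w i))
    -- their stationary distributions
    (πL π𝓛 : Fin 2 → ℝ)
    (hπL : Matrix.vecMul πL PL = πL) (hπLpos : ∀ i, 0 ≤ πL i) (hπLsum : ∑ i, πL i = 1)
    (hπ𝓛 : Matrix.vecMul π𝓛 P𝓛 = π𝓛) (hπ𝓛pos : ∀ i, 0 ≤ π𝓛 i) (hπ𝓛sum : ∑ i, π𝓛 i = 1) :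
    -(∑ i, ∑ j, π𝓛 i * P𝓛 i j * Real.log (P𝓛 i j)) ≠
      -(∑ i, ∑ j, πL i * PL i j * Real.log (PL i j)) :=
  entropy_not_similarity_invariant_general lam hlam 𝓛 L h𝓛 hL u w hu hw hLu h𝓛w PL P𝓛 hPL hP𝓛 πL π𝓛
    hπLpos hπLsum hπ𝓛pos hπ𝓛sum
end

section
/- Under the similarity S⁻¹𝓛S = L of the main theorem, the characteristic polynomial of the Lefkovitch matrix 𝓛 equals that of the pseudo-Leslie matrix L, which is λⁿ − Σ_{j=1}^{n} φ_j Λ_1^{j-1} λ^{n-j} where Λ_1^{j-1} = b_1···b_{j-1}. -/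
open Finset Matrix

/-!
Both matrices consist of a first row, a subdiagonal and (below the first row) a diagonal.
Expanding along the last column, the determinant of such a matrix with first row `r`,
subdiagonal `a` and diagonal `d` is `∑ⱼ (-1)^(j-1) rⱼ (a₁⋯aⱼ₋₁) (dⱼ⋯dₙ₋₁)`, so its characteristic
polynomial is `X ∏_{k<n} (X - d_k) - ∑ⱼ rⱼ (a₁⋯aⱼ₋₁) ∏_{k ≥ j} (X - d_k)`.
For the pseudo-Leslie matrix (`d = 0`) this is the claimed expansion. For the Lefkovitch matrix
(`d = c`), Vieta's formula expands `∏_{k ≥ j} (X - c_k)` into the `Γⱼ^p`, and collecting powers of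
`X` gives the coefficients `∑ₖ Γₖ^(j-k) fₖ Λ₁^(k-1) - Γ₁^j`, which equal `φⱼ Λ₁^(j-1)` because the
`bₖ` do not vanish.
-/

section

open Polynomial

variable {R : Type*} [CommRing R]

def firstRowBidiag (n : ℕ) (r a d : ℕ → R) : Matrix (Fin n) (Fin n) R := fun i j =>
  if i.val = 0 then r (j.val + 1)
  else if i.val = j.val + 1 then a i.val
  else if i = j then d i.val
  else 0

theorem det_firstRowBidiag_succ {n : ℕ} (hn : n ≠ 0) (r a d : ℕ → R) :
    (firstRowBidiag (n + 1) r a d).det =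
      d n * (firstRowBidiag n r a d).det + (-1) ^ n * r (n + 1) * ∏ k ∈ Icc 1 n, a k := by
  set M := firstRowBidiag (n + 1) r a d
  have hlast : M (Fin.last n) (Fin.last n) = d n := by simp [M, firstRowBidiag, hn]
  have hfirst : M 0 (Fin.last n) = r (n + 1) := by simp [M, firstRowBidiag]
  have hmiddle (i : Fin (n + 1)) (hi : i ≠ Fin.last n ∧ i ≠ 0) : M i (Fin.last n) = 0 := by
    obtain ⟨hi_last, hi_zero⟩ := hi
    have h0 : (i : ℕ) ≠ 0 := Fin.val_ne_zero_iff.mpr hi_zero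
    have hlt : (i : ℕ) < n := Fin.val_lt_last hi_last
    simp only [M, firstRowBidiag, Fin.val_last, if_neg h0, if_neg (show (i : ℕ) ≠ n + 1 by omega),
      if_neg hi_last]
  have hminor_last : M.submatrix (Fin.last n).succAbove (Fin.last n).succAbove =
      firstRowBidiag n r a d := by
    ext i j
    simp [M, firstRowBidiag, Fin.ext_iff]
  have hminor_first : (M.submatrix (0 : Fin (n + 1)).succAbove (Fin.last n).succAbove).det =
      ∏ k ∈ Icc 1 n, a k := by
    rw [Fin.succAbove_zero, Fin.succAbove_last, det_of_isUpperTriangular]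
    · rw [← Ico_add_one_right_eq_Icc, prod_Ico_eq_prod_range, ← Fin.prod_univ_eq_prod_range]
      refine prod_congr rfl fun i _ => ?_
      simp [M, firstRowBidiag, add_comm]
    · intro i j (hij : (j : ℕ) < i)
      simp only [submatrix_apply, M, firstRowBidiag, Fin.val_succ, Fin.val_castSucc, Fin.ext_iff]
      rw [if_neg (by omega), if_neg (by omega), if_neg (by omega)]
  rw [det_succ_column _ (Fin.last n), Fintype.sum_eq_add (Fin.last n) 0 (by simp [Fin.ext_iff, hn])
    fun i hi => by rw [hmiddle i hi, mul_zero, zero_mul]]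
  rw [hlast, hfirst, hminor_last, hminor_first, ← two_mul, pow_mul]
  simp

theorem det_firstRowBidiag {n : ℕ} (hn : 1 ≤ n) (r a d : ℕ → R) :
    (firstRowBidiag n r a d).det = ∑ j ∈ Icc 1 n,
      (-1) ^ (j - 1) * r j * (∏ k ∈ Icc 1 (j - 1), a k) * ∏ k ∈ Icc j (n - 1), d k := by
  induction n, hn using Nat.le_induction with
  | base => simp [firstRowBidiag]
  | succ n hn ih =>
    rw [det_firstRowBidiag_succ (by omega), ih, sum_Icc_succ_top (by omega), mul_sum]
    congr 1
    · refine sum_congr rfl fun j hj => ?_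
      obtain ⟨m, rfl⟩ : ∃ m, n = m + 1 := ⟨n - 1, by omega⟩
      simp only [Nat.add_sub_cancel]
      rw [prod_Icc_succ_top (by grind)]
      ring
    · simp

theorem charmatrix_firstRowBidiag (n : ℕ) (r a d : ℕ → R) :
    charmatrix (firstRowBidiag n r a d) = firstRowBidiag n
      (fun j => (if j = 1 then X else 0) - C (r j)) (fun k => -C (a k)) (fun k => X - C (d k)) := by
  ext i j
  rw [charmatrix_apply, diagonal_apply]
  simp only [firstRowBidiag]
  split_ifs <;> simp_all; omega

theorem charpoly_firstRowBidiag {n : ℕ} (hn : 1 ≤ n) (r a d : ℕ → R) :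
    (firstRowBidiag n r a d).charpoly = X * ∏ k ∈ Icc 1 (n - 1), (X - C (d k)) -
      ∑ j ∈ Icc 1 n, C (r j * ∏ k ∈ Icc 1 (j - 1), a k) * ∏ k ∈ Icc j (n - 1), (X - C (d k)) := by
  have hsign (j : ℕ) : (-1 : R[X]) ^ (j - 1) * ∏ k ∈ Icc 1 (j - 1), -C (a k) =
      C (∏ k ∈ Icc 1 (j - 1), a k) := by
    rw [prod_neg, Nat.card_Icc, Nat.add_sub_cancel, ← mul_assoc, ← mul_pow, neg_one_mul, neg_neg,
      one_pow, one_mul, map_prod]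
  have hterm (j : ℕ) (q : R[X]) (P : R[X]) :
      (-1) ^ (j - 1) * q * (∏ k ∈ Icc 1 (j - 1), -C (a k)) * P =
        q * C (∏ k ∈ Icc 1 (j - 1), a k) * P := by
    rw [← hsign]; ring
  rw [charpoly, charmatrix_firstRowBidiag, det_firstRowBidiag hn]
  simp only [hterm, sub_mul, ite_mul, zero_mul, sum_sub_distrib, sum_ite_eq', mem_Icc, le_refl, hn,
    and_self, if_true, ← C_mul]
  simp

theorem prod_X_sub_C_eq_sum_powersetCard {ι : Type*} (s : Finset ι) (c : ι → R) :
    ∏ i ∈ s, (X - C (c i)) = ∑ p ∈ range (#s + 1),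
      C ((-1) ^ p * ∑ t ∈ s.powersetCard p, ∏ i ∈ t, c i) * X ^ (#s - p) := by
  have h := Multiset.prod_X_sub_X_eq_sum_esymm (s.val.map c)
  rw [Multiset.map_map, Multiset.card_map] at h
  refine h.trans (sum_congr rfl fun p _ => ?_)
  rw [esymm_map_val, C_mul, C_pow, C_neg, C_1, mul_assoc]
  rfl

theorem card_Icc_sub_one {k : ℕ} (hk : 1 ≤ k) (n : ℕ) : #(Icc k (n - 1)) = n - k := by
  rw [Nat.card_Icc]; omega

theorem Gam_eq_zero {n k p : ℕ} (c : ℕ → ℝ) (hk : 1 ≤ k) (hp : n - k < p) : Gam n c k p = 0 := by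
  rw [Gam, powersetCard_eq_empty.mpr (by rwa [card_Icc_sub_one hk]), sum_empty, mul_zero]

theorem prod_X_sub_C_Icc_eq_sum_Gam (n : ℕ) (c : ℕ → ℝ) {k : ℕ} (hk : 1 ≤ k) :
    ∏ i ∈ Icc k (n - 1), (X - C (c i)) =
      ∑ p ∈ range (n - k + 1), C (Gam n c k p) * X ^ (n - k - p) := by
  rw [prod_X_sub_C_eq_sum_powersetCard, card_Icc_sub_one hk]
  rfl

theorem X_mul_prod_X_sub_C_Icc {n : ℕ} (hn : 1 ≤ n) (c : ℕ → ℝ) :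
    X * ∏ i ∈ Icc 1 (n - 1), (X - C (c i)) =
      X ^ n + ∑ j ∈ Icc 1 n, C (Gam n c 1 j) * X ^ (n - j) := by
  obtain ⟨m, rfl⟩ : ∃ m, n = m + 1 := ⟨n - 1, by omega⟩
  calc X * ∏ i ∈ Icc 1 m, (X - C (c i))
      = ∑ p ∈ range (m + 1), C (Gam (m + 1) c 1 p) * X ^ (m + 1 - p) := by
        have h := prod_X_sub_C_Icc_eq_sum_Gam (m + 1) c le_rfl
        rw [Nat.add_sub_cancel] at h
        rw [h, mul_sum]
        refine sum_congr rfl fun p hp => ?_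
        rw [show m + 1 - p = m - p + 1 by grind, pow_succ]
        ring
    _ = ∑ p ∈ range (m + 2), C (Gam (m + 1) c 1 p) * X ^ (m + 1 - p) := by
        rw [sum_range_succ _ (m + 1), Gam_eq_zero c le_rfl (by omega), C_0, zero_mul, add_zero]
    _ = X ^ (m + 1) + ∑ j ∈ Icc 1 (m + 1), C (Gam (m + 1) c 1 j) * X ^ (m + 1 - j) := by
        rw [sum_range_succ', ← Ico_add_one_right_eq_Icc, sum_Ico_eq_sum_range, add_comm]
        simp [Gam, add_comm 1]

theorem sum_C_mul_prod_X_sub_C_Icc (n : ℕ) (c g : ℕ → ℝ) :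
    ∑ k ∈ Icc 1 n, C (g k) * ∏ i ∈ Icc k (n - 1), (X - C (c i)) =
      ∑ j ∈ Icc 1 n, C (∑ k ∈ Icc 1 j, Gam n c k (j - k) * g k) * X ^ (n - j) := by
  have hinner (k : ℕ) (hk : k ∈ Icc 1 n) : C (g k) * ∏ i ∈ Icc k (n - 1), (X - C (c i)) =
      ∑ j ∈ Ico k (n + 1), C (Gam n c k (j - k) * g k) * X ^ (n - j) := by
    rw [mem_Icc] at hk
    rw [prod_X_sub_C_Icc_eq_sum_Gam n c hk.1, sum_Ico_eq_sum_range, mul_sum,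
      show n + 1 - k = n - k + 1 by omega]
    refine sum_congr rfl fun p _ => ?_
    rw [Nat.add_sub_cancel_left, Nat.sub_sub, C_mul]
    ring
  rw [sum_congr rfl hinner, ← Ico_add_one_right_eq_Icc, sum_Ico_Ico_comm]
  simp only [Ico_add_one_right_eq_Icc, map_sum, sum_mul]

theorem Lam_mul_Lam (b : ℕ → ℝ) {i k j : ℕ} (hik : i ≤ k + 1) (hkj : k ≤ j) :
    Lam b i k * Lam b (k + 1) j = Lam b i j := by
  simp only [Lam, ← Ico_add_one_right_eq_Icc]
  exact prod_Ico_consecutive _ hik (by omega)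

theorem phi_mul_Lam {n j : ℕ} (f c b : ℕ → ℝ) (hLam : Lam b 1 (j - 1) ≠ 0) :
    phi n f c b j * Lam b 1 (j - 1) =
      ∑ k ∈ Icc 1 j, Gam n c k (j - k) * (f k * Lam b 1 (k - 1)) - Gam n c 1 j := by
  rw [phi, add_mul, neg_mul, div_mul_cancel₀ _ hLam, sum_mul, neg_add_eq_sub]
  congr 1
  refine sum_congr rfl fun k hk => ?_
  rw [mem_Icc] at hk
  have hsplit := Lam_mul_Lam b (i := 1) (k := k - 1) (j := j - 1) (by omega) (by omega)
  rw [Nat.sub_add_cancel hk.1] at hsplit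
  rw [← hsplit] at hLam ⊢
  field_simp [right_ne_zero_of_mul hLam]

theorem PLes_eq_firstRowBidiag (n : ℕ) (φ b : ℕ → ℝ) : PLes n φ b = firstRowBidiag n φ b 0 := by
  ext i j
  simp [PLes, firstRowBidiag]

theorem charpoly_PLes {n : ℕ} (hn : 1 ≤ n) (φ b : ℕ → ℝ) :
    (PLes n φ b).charpoly = X ^ n - ∑ j ∈ Icc 1 n, C (φ j * Lam b 1 (j - 1)) * X ^ (n - j) := by
  rw [PLes_eq_firstRowBidiag, charpoly_firstRowBidiag hn]
  simp only [Pi.zero_apply, C_0, sub_zero, prod_const, Nat.card_Icc, Nat.sub_add_cancel hn,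
    ← pow_succ']
  rfl

theorem charpoly_Lef {n : ℕ} (hn : 1 ≤ n) (f c b : ℕ → ℝ) :
    (Lef n f c b).charpoly = X ^ n - ∑ j ∈ Icc 1 n,
      C (∑ k ∈ Icc 1 j, Gam n c k (j - k) * (f k * Lam b 1 (k - 1)) - Gam n c 1 j) * X ^ (n - j) := by
  rw [show Lef n f c b = firstRowBidiag n f b c from rfl, charpoly_firstRowBidiag hn,
    X_mul_prod_X_sub_C_Icc hn, sum_C_mul_prod_X_sub_C_Icc]
  simp only [Lam, C_sub, sub_mul, sum_sub_distrib]
  abel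

end

open Polynomial in
/-- The Lefkovitch matrix and the similar pseudo-Leslie matrix share the
characteristic polynomial `λⁿ − ∑_{j=1}^n φ_j Λ_1^{j-1} λ^{n-j}`. -/
theorem lefkovitch_charpoly (n : ℕ) (hn : 1 ≤ n) (f c b : ℕ → ℝ)
    (hb : ∀ k, 1 ≤ k → k ≤ n - 1 → 0 < b k) :
    (Lef n f c b).charpoly = (PLes n (phi n f c b) b).charpoly ∧
      (PLes n (phi n f c b) b).charpoly =
        X ^ n - ∑ j ∈ Finset.Icc 1 n, C (phi n f c b j * Lam b 1 (j - 1)) * X ^ (n - j) := by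
  have hLam (j : ℕ) (hj : j ∈ Icc 1 n) : Lam b 1 (j - 1) ≠ 0 :=
    prod_ne_zero_iff.mpr fun k hk => (hb k (mem_Icc.mp hk).1 (by grind)).ne'
  have hPLes := charpoly_PLes hn (phi n f c b) b
  refine ⟨?_, hPLes⟩
  rw [hPLes, charpoly_Lef hn]
  exact congrArg _ (sum_congr rfl fun j hj => by rw [phi_mul_Lam f c b (hLam j hj)])
end
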